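/- arXiv:2506.18066 — 2 statements merged into one kernel-verified Lean document; each statement's English description precedes it below -/
import Mathlib

section
/- The Hopf fibration admits no continuous section: there is no continuous map σ from the complex projective line ℙ(ℂ²) (the projectivization of the 2-dimensional complex vector space ℂ²) to the unit sphere S³ = {z ∈ ℂ² : ‖z‖ = 1} such that for every point ℓ ∈ ℙ(ℂ²), the vector σ(ℓ) represents ℓ, i.e., the projectivization map sends σ(ℓ) to ℓ. -/
open Metric

noncomputable section
open Complex Set

def Rect (a b c d : ℝ) : Set ℂ := {z | a ≤ z.re ∧ z.re ≤ b ∧ c ≤ z.im ∧ z.im ≤ d}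

lemma rect_convex (a b c d : ℝ) : Convex ℝ (Rect a b c d) := by
  have : Rect a b c d = Complex.reLm ⁻¹' (Icc a b) ∩ Complex.imLm ⁻¹' (Icc c d) := by
    ext z; simp [Rect, and_assoc]
  rw [this]
  exact ((convex_Icc a b).linear_preimage _).inter ((convex_Icc c d).linear_preimage _)

lemma rect_preconnected (a b c d : ℝ) : IsPreconnected (Rect a b c d) :=
  (rect_convex a b c d).isPreconnected

lemma rect_closed (a b c d : ℝ) : IsClosed (Rect a b c d) := by
  have : Rect a b c d = Complex.re ⁻¹' (Icc a b) ∩ Complex.im ⁻¹' (Icc c d) := by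
    ext z; simp [Rect, and_assoc]
  rw [this]
  exact (isClosed_Icc.preimage Complex.continuous_re).inter (isClosed_Icc.preimage Complex.continuous_im)

lemma continuousOn_union_closed {X Y : Type*} [TopologicalSpace X] [TopologicalSpace Y]
    {f : X → Y} {A B : Set X} (hA : IsClosed A) (hB : IsClosed B)
    (ha : ContinuousOn f A) (hb : ContinuousOn f B) : ContinuousOn f (A ∪ B) := by
  intro x hx
  have cA : ContinuousWithinAt f A x := by
    by_cases h : x ∈ A
    · exact ha x h
    · exact continuousWithinAt_of_notMem_closure (by rwa [hA.closure_eq])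
  have cB : ContinuousWithinAt f B x := by
    by_cases h : x ∈ B
    · exact hb x h
    · exact continuousWithinAt_of_notMem_closure (by rwa [hB.closure_eq])
  exact cA.union cB

lemma int_const {X : Type*} [TopologicalSpace X] {S : Set X} (hS : IsPreconnected S)
    {q : X → ℝ} (hq : ContinuousOn q S) (hint : ∀ x ∈ S, ∃ n : ℤ, q x = n) :
    ∀ x ∈ S, ∀ y ∈ S, q x = q y := by
  intro x hx y hy
  by_contra hne
  wlog hlt : q x < q y generalizing x y
  · exact this y hy x hx (Ne.symm hne) (by cases (lt_or_gt_of_ne hne) with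
      | inl h => exact absurd h hlt
      | inr h => exact h)
  obtain ⟨nx, hnx⟩ := hint x hx
  obtain ⟨ny, hny⟩ := hint y hy
  have himg : IsPreconnected (q '' S) := hS.image q hq
  have hoc := himg.ordConnected
  have hmem : (nx : ℝ) + 1/2 ∈ q '' S := by
    apply hoc.out ⟨x, hx, hnx⟩ ⟨y, hy, hny⟩
    have h1 : (nx:ℝ) < ny := by rw [← hnx, ← hny]; exact hlt
    have h2 : nx < ny := by exact_mod_cast h1
    have h3 : (nx : ℝ) + 1 ≤ ny := by exact_mod_cast h2
    constructor <;> simp <;> linarith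
  obtain ⟨z, hz, hqz⟩ := hmem
  obtain ⟨k, hk⟩ := hint z hz
  rw [hk] at hqz
  have : (2*k : ℝ) = 2*nx + 1 := by push_cast; linarith
  have : 2*k = 2*nx + 1 := by exact_mod_cast this
  omega

/-- A continuous function on a preconnected set whose values under `exp` are 1 is constant. -/
lemma exp_one_const {X : Type*} [TopologicalSpace X] {S : Set X} (hS : IsPreconnected S)
    {d : X → ℂ} (hd : ContinuousOn d S) (h1 : ∀ x ∈ S, Complex.exp (d x) = 1) :
    ∀ x ∈ S, ∀ y ∈ S, d x = d y := by
  have hform : ∀ x ∈ S, ∃ n : ℤ, d x = n * (2 * Real.pi * I) := by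
    intro x hx; exact Complex.exp_eq_one_iff.mp (h1 x hx)
  set q : X → ℝ := fun x => (d x / (2 * Real.pi * I)).re with hq
  have h2pi : (2 * Real.pi * I : ℂ) ≠ 0 := by
    simp [Real.pi_ne_zero, Complex.I_ne_zero]
  have hqn : ∀ x ∈ S, ∃ n : ℤ, q x = n := by
    intro x hx
    obtain ⟨n, hn⟩ := hform x hx
    exact ⟨n, by rw [hq]; simp [hn, mul_div_assoc, div_self h2pi]⟩
  have hqc : ContinuousOn q S := (Complex.continuous_re.comp_continuousOn (hd.div_const _))
  have hd_of_q : ∀ x ∈ S, d x = (q x : ℂ) * (2 * Real.pi * I) := by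
    intro x hx
    obtain ⟨n, hn⟩ := hform x hx
    have hqxn : q x = (n : ℝ) := by
      simp only [hq, hn, mul_div_assoc, div_self h2pi, mul_one]
      simp
    rw [hqxn, hn]
    push_cast
    ring
  intro x hx y hy
  rw [hd_of_q x hx, hd_of_q y hy, int_const hS hqc hqn x hx y hy]


/-- Glue two logarithm lifts along a preconnected nonempty overlap. -/
lemma hopfAux_glue_lift {f : ℂ → ℂ} {A B : Set ℂ} (hA : IsClosed A) (hB : IsClosed B)
    (hconn : IsPreconnected (A ∩ B)) (hne : (A ∩ B).Nonempty)
    {L₁ L₂ : ℂ → ℂ} (h₁ : ContinuousOn L₁ A) (h₂ : ContinuousOn L₂ B)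
    (e₁ : ∀ z ∈ A, Complex.exp (L₁ z) = f z) (e₂ : ∀ z ∈ B, Complex.exp (L₂ z) = f z) :
    ∃ L : ℂ → ℂ, ContinuousOn L (A ∪ B) ∧ ∀ z ∈ A ∪ B, Complex.exp (L z) = f z := by
  obtain ⟨p, hp⟩ := hne
  set c : ℂ := L₁ p - L₂ p with hc
  have hd : ∀ z ∈ A ∩ B, L₁ z - L₂ z = c := by
    have h1' : ∀ z ∈ A ∩ B, Complex.exp (L₁ z - L₂ z) = 1 := by
      intro z hz
      rw [Complex.exp_sub, e₁ z hz.1, e₂ z hz.2]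
      have : f z ≠ 0 := by rw [← e₂ z hz.2]; exact Complex.exp_ne_zero _
      exact div_self this
    exact fun z hz => exp_one_const hconn
      ((h₁.mono inter_subset_left).sub (h₂.mono inter_subset_right)) h1' z hz p hp
  classical
  set L : ℂ → ℂ := fun z => if z ∈ A then L₁ z else L₂ z + c with hL
  have hLA : ∀ z ∈ A, L z = L₁ z := fun z hz => by simp [hL, hz]
  have hLB : ∀ z ∈ B, L z = L₂ z + c := by
    intro z hz
    by_cases h : z ∈ A
    · simp only [hL, if_pos h]
      have := hd z ⟨h, hz⟩
      linear_combination this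
    · simp [hL, h]
  refine ⟨L, ?_, ?_⟩
  · apply continuousOn_union_closed hA hB
    · exact ContinuousOn.congr h₁ hLA
    · exact ContinuousOn.congr (h₂.add continuousOn_const) hLB
  · intro z hz
    rcases hz with hz | hz
    · rw [hLA z hz]; exact e₁ z hz
    · have hfp : f p ≠ 0 := by rw [← e₂ p hp.2]; exact Complex.exp_ne_zero _
      rw [hLB z hz, Complex.exp_add, hc, Complex.exp_sub, e₁ p hp.1, e₂ p hp.2, e₂ z hz]
      field_simp

/-- Lift on a set where f stays close to its value at a base point. -/
lemma hopfAux_small_lift {f : ℂ → ℂ} (hf : Continuous f) {S : Set ℂ} {w₀ : ℂ} (hw₀ : f w₀ ≠ 0)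
    (hosc : ∀ z ∈ S, ‖f z - f w₀‖ < ‖f w₀‖) :
    ∃ L : ℂ → ℂ, ContinuousOn L S ∧ ∀ z ∈ S, Complex.exp (L z) = f z := by
  refine ⟨fun z => Complex.log (f z / f w₀) + Complex.log (f w₀), ?_, ?_⟩
  · apply ContinuousOn.add _ continuousOn_const
    apply ContinuousOn.clog ((hf.continuousOn).div_const _)
    intro z hz
    have : f z / f w₀ = 1 + (f z - f w₀) / f w₀ := by field_simp; ring
    rw [this]
    apply Complex.mem_slitPlane_of_norm_lt_one
    rw [norm_div]
    rw [div_lt_one (norm_pos_iff.mpr hw₀)]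
    exact hosc z hz
  · intro z hz
    have hz0 : f z ≠ 0 := by
      intro h
      have := hosc z hz
      rw [h, zero_sub, norm_neg] at this
      exact lt_irrefl _ this
    rw [Complex.exp_add, Complex.exp_log (div_ne_zero hz0 hw₀), Complex.exp_log hw₀]
    field_simp


lemma rect_subset {a b c d a' b' c' d' : ℝ} (h1 : a' ≤ a) (h2 : b ≤ b') (h3 : c' ≤ c)
    (h4 : d ≤ d') : Rect a b c d ⊆ Rect a' b' c' d' := by
  intro z hz; obtain ⟨u1, u2, u3, u4⟩ := hz
  exact ⟨by linarith, by linarith, by linarith, by linarith⟩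

lemma rect_union_vert {a b c d e : ℝ} (h1 : c ≤ d) (h2 : d ≤ e) :
    Rect a b c d ∪ Rect a b d e = Rect a b c e := by
  ext z
  constructor
  · rintro (⟨u1,u2,u3,u4⟩|⟨u1,u2,u3,u4⟩) <;>
      exact ⟨u1, u2, by linarith, by linarith⟩
  · rintro ⟨u1,u2,u3,u4⟩
    rcases le_total z.im d with h|h
    · exact Or.inl ⟨u1,u2,u3,h⟩
    · exact Or.inr ⟨u1,u2,h,u4⟩

lemma rect_inter_vert {a b c d e : ℝ} (h1 : c ≤ d) (h2 : d ≤ e) :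
    Rect a b c d ∩ Rect a b d e = Rect a b d d := by
  ext z
  constructor
  · rintro ⟨⟨u1,u2,u3,u4⟩,⟨v1,v2,v3,v4⟩⟩
    exact ⟨u1,u2,v3,u4⟩
  · rintro ⟨u1,u2,u3,u4⟩
    exact ⟨⟨u1,u2,by linarith,u4⟩,⟨u1,u2,u3,by linarith⟩⟩

lemma rect_union_horiz {a b c d e : ℝ} (h1 : a ≤ b) (h2 : b ≤ c) :
    Rect a b d e ∪ Rect b c d e = Rect a c d e := by
  ext z
  constructor
  · rintro (⟨u1,u2,u3,u4⟩|⟨u1,u2,u3,u4⟩) <;>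
      exact ⟨by linarith, by linarith, u3, u4⟩
  · rintro ⟨u1,u2,u3,u4⟩
    rcases le_total z.re b with h|h
    · exact Or.inl ⟨u1,h,u3,u4⟩
    · exact Or.inr ⟨h,u2,u3,u4⟩

lemma rect_inter_horiz {a b c d e : ℝ} (h1 : a ≤ b) (h2 : b ≤ c) :
    Rect a b d e ∩ Rect b c d e = Rect b b d e := by
  ext z
  constructor
  · rintro ⟨⟨u1,u2,u3,u4⟩,⟨v1,v2,v3,v4⟩⟩
    exact ⟨v1,u2,u3,u4⟩
  · rintro ⟨u1,u2,u3,u4⟩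
    exact ⟨⟨by linarith,u2,u3,u4⟩,⟨u1,by linarith,u3,u4⟩⟩

lemma rect_nonempty {a b c d : ℝ} (h1 : a ≤ b) (h2 : c ≤ d) : (Rect a b c d).Nonempty :=
  ⟨⟨a, c⟩, le_refl a, h1, le_refl c, h2⟩

section grid

variable {f : ℂ → ℂ} {n : ℕ}
variable (hf : Continuous f) (h0 : ∀ z, f z ≠ 0)
variable (hosc : ∀ z w : ℂ, z ∈ Rect 0 ((n:ℝ)+1) 0 ((n:ℝ)+1) → w ∈ Rect 0 ((n:ℝ)+1) 0 ((n:ℝ)+1) →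
    ‖z - w‖ ≤ 2 → ‖f z - f w‖ < ‖f w‖)

include hf h0 hosc

lemma lift_sq {a c : ℝ} (ha0 : 0 ≤ a) (ha1 : a + 1 ≤ (n:ℝ)+1) (hc0 : 0 ≤ c)
    (hc1 : c + 1 ≤ (n:ℝ)+1) :
    ∃ L : ℂ → ℂ, ContinuousOn L (Rect a (a+1) c (c+1)) ∧
      ∀ z ∈ Rect a (a+1) c (c+1), Complex.exp (L z) = f z := by
  set w₀ : ℂ := ⟨a, c⟩ with hw₀
  apply hopfAux_small_lift hf (h0 w₀)
  intro z hz
  obtain ⟨u1, u2, u3, u4⟩ := hz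
  have hsub : Rect a (a+1) c (c+1) ⊆ Rect 0 ((n:ℝ)+1) 0 ((n:ℝ)+1) :=
    rect_subset ha0 ha1 hc0 hc1
  apply hosc z w₀ (hsub ⟨u1,u2,u3,u4⟩) (hsub ⟨le_refl a, by linarith, le_refl c, by linarith⟩)
  calc ‖z - w₀‖ ≤ |(z - w₀).re| + |(z - w₀).im| := Complex.norm_le_abs_re_add_abs_im _
    _ ≤ 2 := by
        have h1 : |z.re - a| ≤ 1 := abs_le.mpr ⟨by linarith, by linarith⟩
        have h2 : |z.im - c| ≤ 1 := abs_le.mpr ⟨by linarith, by linarith⟩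
        have hre : (z - w₀).re = z.re - a := by simp [hw₀, Complex.sub_re]
        have him : (z - w₀).im = z.im - c := by simp [hw₀, Complex.sub_im]
        rw [hre, him]
        linarith

lemma lift_strip {a : ℝ} (ha0 : 0 ≤ a) (ha1 : a + 1 ≤ (n:ℝ)+1) :
    ∀ j : ℕ, (j:ℝ) + 1 ≤ (n:ℝ)+1 →
    ∃ L : ℂ → ℂ, ContinuousOn L (Rect a (a+1) 0 ((j:ℝ)+1)) ∧
      ∀ z ∈ Rect a (a+1) 0 ((j:ℝ)+1), Complex.exp (L z) = f z := by
  intro j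
  induction j with
  | zero => intro hj; simpa using lift_sq hf h0 hosc ha0 ha1 (le_refl 0) (by simpa using hj)
  | succ j ih =>
    intro hj
    have hj' : (j:ℝ) + 1 ≤ (n:ℝ) + 1 := by push_cast at hj ⊢; linarith
    obtain ⟨L₁, hL₁, e₁⟩ := ih hj'
    have hsq := lift_sq hf h0 hosc (a := a) (c := (j:ℝ)+1) ha0 ha1 (by positivity)
      (by push_cast at hj ⊢; linarith)
    obtain ⟨L₂, hL₂, e₂⟩ := hsq
    have hun : Rect a (a+1) 0 ((j:ℝ)+1) ∪ Rect a (a+1) ((j:ℝ)+1) ((j:ℝ)+1+1) =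
        Rect a (a+1) 0 ((j:ℝ)+1+1) := rect_union_vert (by positivity) (by linarith)
    have hin : Rect a (a+1) 0 ((j:ℝ)+1) ∩ Rect a (a+1) ((j:ℝ)+1) ((j:ℝ)+1+1) =
        Rect a (a+1) ((j:ℝ)+1) ((j:ℝ)+1) := rect_inter_vert (by positivity) (by linarith)
    obtain ⟨L, hL, he⟩ := hopfAux_glue_lift (rect_closed _ _ _ _) (rect_closed _ _ _ _)
      (by rw [hin]; exact rect_preconnected _ _ _ _)
      (by rw [hin]; exact rect_nonempty (by linarith) (le_refl _))
      hL₁ hL₂ e₁ e₂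
    rw [hun] at hL he
    refine ⟨L, by convert hL using 2 <;> push_cast <;> ring, ?_⟩
    intro z hz
    apply he
    convert hz using 2 <;> push_cast <;> ring

lemma lift_main :
    ∃ L : ℂ → ℂ, ContinuousOn L (Rect 0 ((n:ℝ)+1) 0 ((n:ℝ)+1)) ∧
      ∀ z ∈ Rect 0 ((n:ℝ)+1) 0 ((n:ℝ)+1), Complex.exp (L z) = f z := by
  have key : ∀ i : ℕ, (i:ℝ) + 1 ≤ (n:ℝ)+1 →
      ∃ L : ℂ → ℂ, ContinuousOn L (Rect 0 ((i:ℝ)+1) 0 ((n:ℝ)+1)) ∧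
        ∀ z ∈ Rect 0 ((i:ℝ)+1) 0 ((n:ℝ)+1), Complex.exp (L z) = f z := by
    intro i
    induction i with
    | zero =>
      intro hi
      simpa using lift_strip hf h0 hosc (le_refl (0:ℝ)) (by simpa using hi) n (le_refl _)
    | succ i ih =>
      intro hi
      have hi' : (i:ℝ) + 1 ≤ (n:ℝ) + 1 := by push_cast at hi ⊢; linarith
      obtain ⟨L₁, hL₁, e₁⟩ := ih hi'
      obtain ⟨L₂, hL₂, e₂⟩ := lift_strip hf h0 hosc (a := (i:ℝ)+1) (by positivity)
        (by push_cast at hi ⊢; linarith) n (le_refl _)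
      have hun := rect_union_horiz (a := 0) (b := (i:ℝ)+1) (c := (i:ℝ)+1+1)
        (d := 0) (e := (n:ℝ)+1) (by positivity) (by linarith)
      have hin := rect_inter_horiz (a := 0) (b := (i:ℝ)+1) (c := (i:ℝ)+1+1)
        (d := 0) (e := (n:ℝ)+1) (by positivity) (by linarith)
      obtain ⟨L, hL, he⟩ := hopfAux_glue_lift (rect_closed _ _ _ _) (rect_closed _ _ _ _)
        (by rw [hin]; exact rect_preconnected _ _ _ _)
        (by rw [hin]; exact rect_nonempty (le_refl _) (by push_cast at hi ⊢; linarith))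
        hL₁ hL₂ e₁ e₂
      rw [hun] at hL he
      refine ⟨L, by convert hL using 2 <;> push_cast <;> ring, ?_⟩
      intro z hz
      apply he
      convert hz using 2 <;> push_cast <;> ring
  exact key n (le_refl _)

end grid

lemma hopfAux_no_retraction (f : ℂ → ℂ) (hf : Continuous f)
    (h1 : ∀ z, ‖f z‖ = 1) (hid : ∀ z, ‖z‖ = 1 → f z = z) : False := by
  -- uniform continuity on a big rectangle
  have hQBc : IsCompact (Rect (-4) 8 (-4) 8) := by
    apply Metric.isCompact_of_isClosed_isBounded (rect_closed _ _ _ _)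
    apply Bornology.IsBounded.subset (Metric.isBounded_closedBall (x := (0:ℂ)) (r := 16))
    intro z hz
    obtain ⟨u1,u2,u3,u4⟩ := hz
    simp only [Metric.mem_closedBall, Complex.dist_eq, sub_zero]
    calc ‖z‖ ≤ |z.re| + |z.im| := Complex.norm_le_abs_re_add_abs_im z
      _ ≤ 16 := by
          have e1 : |z.re| ≤ 8 := abs_le.mpr ⟨by linarith, u2⟩
          have e2 : |z.im| ≤ 8 := abs_le.mpr ⟨by linarith, u4⟩
          linarith
  have huc := hQBc.uniformContinuousOn_of_continuous hf.continuousOn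
  rw [Metric.uniformContinuousOn_iff_le] at huc
  obtain ⟨δ, hδ, hducont⟩ := huc (1/2) (by norm_num)
  set ε : ℝ := min (δ/2) 1 with hε
  have hε0 : 0 < ε := lt_min (by linarith) one_pos
  have hε1 : ε ≤ 1 := min_le_right _ _
  have hεδ : 2 * ε ≤ δ := by
    have := min_le_left (δ/2) 1
    have : ε ≤ δ/2 := this
    linarith
  set n : ℕ := ⌈6/ε⌉₊ with hn
  set N : ℝ := (n:ℝ) + 1 with hN
  have hN6 : 6/ε ≤ N := by
    have := Nat.le_ceil (6/ε)
    rw [hN]; linarith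
  have hNε : 6 ≤ N * ε := by
    have : 6/ε * ε ≤ N * ε := by nlinarith
    rw [div_mul_cancel₀ 6 (ne_of_gt hε0)] at this
    exact this
  have hNup : N * ε ≤ 8 := by
    have h2 : (n:ℝ) ≤ 6/ε + 1 := le_of_lt (Nat.ceil_lt_add_one (by positivity))
    have hN2 : N ≤ 6/ε + 2 := by rw [hN]; linarith
    calc N * ε ≤ (6/ε + 2) * ε := by nlinarith
      _ = 6 + 2*ε := by field_simp
      _ ≤ 8 := by linarith
  -- the rescaled function
  set φ : ℂ → ℂ := fun z => (ε:ℂ) * z - 2 - 2*I with hφ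
  have hφmem : ∀ z ∈ Rect 0 N 0 N, φ z ∈ Rect (-4) 8 (-4) 8 := by
    rintro z ⟨u1,u2,u3,u4⟩
    have hre : (φ z).re = ε * z.re - 2 := by simp [hφ]
    have him : (φ z).im = ε * z.im - 2 := by simp [hφ]
    have b1 : ε * z.re ≤ N * ε := by nlinarith
    have b2 : ε * z.im ≤ N * ε := by nlinarith
    exact ⟨by rw [hre]; nlinarith, by rw [hre]; nlinarith,
      by rw [him]; nlinarith, by rw [him]; nlinarith⟩
  set f₁ : ℂ → ℂ := fun z => f (φ z) with hf₁
  have hφc : Continuous φ := by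
    rw [hφ]
    exact ((continuous_const.mul continuous_id).sub continuous_const).sub continuous_const
  have hf₁c : Continuous f₁ := hf.comp hφc
  have h₁0 : ∀ z, f₁ z ≠ 0 := by
    intro z h
    have := h1 (φ z)
    rw [hf₁] at h; simp only at h
    rw [h] at this; simp at this
  have hosc : ∀ z w : ℂ, z ∈ Rect 0 N 0 N → w ∈ Rect 0 N 0 N →
      ‖z - w‖ ≤ 2 → ‖f₁ z - f₁ w‖ < ‖f₁ w‖ := by
    intro z w hz hw hd2
    have hdist : dist (φ z) (φ w) ≤ δ := by
      rw [Complex.dist_eq]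
      have : φ z - φ w = (ε:ℂ) * (z - w) := by rw [hφ]; ring
      rw [this, norm_mul]
      have : ‖(ε:ℂ)‖ = ε := by
        rw [Complex.norm_real, Real.norm_eq_abs, abs_of_pos hε0]
      rw [this]
      nlinarith [norm_nonneg (z - w)]
    have := hducont (φ z) (hφmem z hz) (φ w) (hφmem w hw) hdist
    rw [Complex.dist_eq] at this
    have hfw : ‖f₁ w‖ = 1 := h1 (φ w)
    rw [hfw]
    calc ‖f₁ z - f₁ w‖ ≤ 1/2 := this
      _ < 1 := by norm_num
  obtain ⟨L, hL, he⟩ := lift_main hf₁c h₁0 hosc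
  -- the loop
  set p : ℝ → ℂ := fun t => (Complex.exp (t * I) + 2 + 2*I) / (ε:ℂ) with hp
  have hcos : ∀ t : ℝ, (Complex.exp (t * I) + 2 + 2*I).re = Real.cos t + 2 := by
    intro t
    simp [Complex.add_re, Complex.exp_ofReal_mul_I_re]
  have hsin : ∀ t : ℝ, (Complex.exp (t * I) + 2 + 2*I).im = Real.sin t + 2 := by
    intro t
    simp [Complex.add_im, Complex.exp_ofReal_mul_I_im]
  have hpmem : ∀ t : ℝ, p t ∈ Rect 0 N 0 N := by
    intro t
    have hre : (p t).re = (Real.cos t + 2)/ε := by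
      rw [hp]; simp only [Complex.div_ofReal_re, hcos]
    have him : (p t).im = (Real.sin t + 2)/ε := by
      rw [hp]; simp only [Complex.div_ofReal_im, hsin]
    have hc := Real.neg_one_le_cos t
    have hc' := Real.cos_le_one t
    have hs := Real.neg_one_le_sin t
    have hs' := Real.sin_le_one t
    have h3N : 3/ε ≤ N := by
      have h36 : (3:ℝ)/ε ≤ 6/ε := (div_le_div_iff_of_pos_right hε0).mpr (by norm_num)
      linarith
    refine ⟨?_, ?_, ?_, ?_⟩
    · rw [hre]; apply div_nonneg (by linarith) (le_of_lt hε0)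
    · rw [hre]
      calc (Real.cos t + 2)/ε ≤ 3/ε := (div_le_div_iff_of_pos_right hε0).mpr (by linarith)
        _ ≤ N := h3N
    · rw [him]; apply div_nonneg (by linarith) (le_of_lt hε0)
    · rw [him]
      calc (Real.sin t + 2)/ε ≤ 3/ε := (div_le_div_iff_of_pos_right hε0).mpr (by linarith)
        _ ≤ N := h3N
  -- the unit circle is in the image of φ ∘ p
  have hφp : ∀ t : ℝ, φ (p t) = Complex.exp (t * I) := by
    intro t
    rw [hφ, hp]
    have : (ε:ℂ) ≠ 0 := by
      simp only [ne_eq, Complex.ofReal_eq_zero]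
      exact ne_of_gt hε0
    field_simp
    ring
  set u : ℝ → ℂ := fun t => L (p t) with hu
  have hpc : Continuous p := by
    rw [hp]
    apply Continuous.div_const
    apply Continuous.add (Continuous.add ?_ continuous_const) continuous_const
    exact Complex.continuous_exp.comp (continuous_ofReal.mul continuous_const)
  have huc2 : Continuous u := hL.comp_continuous hpc hpmem
  have huexp : ∀ t : ℝ, Complex.exp (u t) = Complex.exp (t * I) := by
    intro t
    rw [hu]
    have := he (p t) (hpmem t)
    rw [this, hf₁]
    simp only
    rw [hφp t]
    exact hid _ (Complex.norm_exp_ofReal_mul_I t)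
  set d : ℝ → ℂ := fun t => u t - t * I with hd
  have hdexp : ∀ t : ℝ, Complex.exp (d t) = 1 := by
    intro t
    rw [hd]
    simp only
    rw [Complex.exp_sub, huexp t, div_self (Complex.exp_ne_zero _)]
  have hdc : Continuous d := by
    rw [hd]
    exact huc2.sub ((continuous_ofReal.mul continuous_const))
  have hconst := exp_one_const isPreconnected_univ hdc.continuousOn
    (fun x _ => hdexp x) 0 (mem_univ _) (2*Real.pi) (mem_univ _)
  have hexp2 : Complex.exp ((↑(2*Real.pi) : ℂ) * I) = Complex.exp ((↑(0:ℝ) : ℂ) * I) := by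
    push_cast
    rw [Complex.exp_two_pi_mul_I]
    norm_num
  have hp02 : p 0 = p (2*Real.pi) := by
    rw [hp]
    simp only
    rw [hexp2]
  have hu02 : u 0 = u (2*Real.pi) := by rw [hu]; simp only [hp02]
  rw [hd] at hconst
  simp only at hconst
  rw [← hu02] at hconst
  have hX : ((2*Real.pi:ℝ):ℂ) * I = 0 := by
    push_cast at hconst ⊢
    linear_combination hconst
  have h2 : ((2*Real.pi:ℝ):ℂ) = 0 := by
    have hI := Complex.I_ne_zero
    exact (mul_eq_zero.mp hX).resolve_right hI
  rw [Complex.ofReal_eq_zero] at h2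
  have := Real.pi_pos
  linarith

/-- The quotient topology on the projectivization of a topological vector space,
induced from the subspace topology on `V \ {0}`. -/
instance Projectivization.instTopologicalSpace (K V : Type*) [DivisionRing K]
    [AddCommGroup V] [Module K V] [TopologicalSpace V] :
    TopologicalSpace (Projectivization K V) :=
  inferInstanceAs (TopologicalSpace (Quotient (projectivizationSetoid K V)))

def hopfVec (a b : ℂ) : EuclideanSpace ℂ (Fin 2) := (WithLp.equiv 2 (Fin 2 → ℂ)).symm ![a, b]

lemma hopfVec_norm (a b : ℂ) :
    ‖hopfVec a b‖ = Real.sqrt (‖a‖ ^ 2 + ‖b‖ ^ 2) := by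
  rw [EuclideanSpace.norm_eq]
  congr 1
  rw [Fin.sum_univ_two]
  simp [hopfVec]

lemma hopfVec_continuous {X : Type*} [TopologicalSpace X] {f g : X → ℂ}
    (hf : Continuous f) (hg : Continuous g) : Continuous fun x => hopfVec (f x) (g x) := by
  have h1 : Continuous fun x : X => (![f x, g x] : Fin 2 → ℂ) := by
    apply continuous_pi
    intro i
    fin_cases i <;> simpa
  exact (PiLp.continuous_toLp 2 (fun _ : Fin 2 => ℂ)).comp h1

lemma hopfVec_smul (w : ℂ) : w • hopfVec 1 0 = hopfVec w 0 := by
  apply (WithLp.equiv 2 (Fin 2 → ℂ)).injective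
  funext i
  fin_cases i <;> simp [hopfVec]

theorem hopf_fibration_has_no_section :
    ¬ ∃ σ : Projectivization ℂ (EuclideanSpace ℂ (Fin 2)) →
        Metric.sphere (0 : EuclideanSpace ℂ (Fin 2)) 1,
      Continuous σ ∧
      ∀ ℓ : Projectivization ℂ (EuclideanSpace ℂ (Fin 2)),
        Projectivization.mk ℂ ((σ ℓ : EuclideanSpace ℂ (Fin 2)))
          (by
            have h := (σ ℓ).2
            rw [mem_sphere_zero_iff_norm] at h
            intro h0
            rw [h0] at h
            simp at h) = ℓ := by
  rintro ⟨σ, hσc, hσs⟩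
  have hσnorm : ∀ ℓ, ‖(σ ℓ : EuclideanSpace ℂ (Fin 2))‖ = 1 := by
    intro ℓ
    have := (σ ℓ).2
    rwa [mem_sphere_zero_iff_norm] at this
  have hσnz : ∀ ℓ, (σ ℓ : EuclideanSpace ℂ (Fin 2)) ≠ 0 := by
    intro ℓ h0
    have := hσnorm ℓ
    rw [h0] at this
    simp at this
  have hnz : ∀ z : Metric.sphere (0 : EuclideanSpace ℂ (Fin 2)) 1,
      (z : EuclideanSpace ℂ (Fin 2)) ≠ 0 := by
    intro z h0
    have := z.2
    rw [mem_sphere_zero_iff_norm, h0] at this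
    simp at this
  set mkS : Metric.sphere (0 : EuclideanSpace ℂ (Fin 2)) 1 →
      Projectivization ℂ (EuclideanSpace ℂ (Fin 2)) :=
    fun z => Projectivization.mk ℂ z.val (hnz z) with hmkS
  have hmkc : Continuous mkS := by
    have : Continuous fun z : Metric.sphere (0 : EuclideanSpace ℂ (Fin 2)) 1 =>
        (⟨z.val, hnz z⟩ : {v : EuclideanSpace ℂ (Fin 2) // v ≠ 0}) :=
      continuous_subtype_val.subtype_mk _
    exact continuous_quotient_mk'.comp this
  set hmap : Metric.sphere (0 : EuclideanSpace ℂ (Fin 2)) 1 → ℂ :=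
    fun z => (inner ℂ ((σ (mkS z)) : EuclideanSpace ℂ (Fin 2)) (z : EuclideanSpace ℂ (Fin 2)) : ℂ)
    with hhmap
  have key : ∀ z : Metric.sphere (0 : EuclideanSpace ℂ (Fin 2)) 1, ∃ c : ℂ, ‖c‖ = 1 ∧
      (z : EuclideanSpace ℂ (Fin 2)) = c • (σ (mkS z) : EuclideanSpace ℂ (Fin 2)) ∧
      hmap z = c := by
    intro z
    have hmk := hσs (mkS z)
    rw [Projectivization.mk_eq_mk_iff'] at hmk
    obtain ⟨a, ha⟩ := hmk
    have hnorm : ‖a‖ = 1 := by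
      have := congrArg norm ha
      rw [norm_smul, hσnorm (mkS z)] at this
      have hz1 : ‖(z : EuclideanSpace ℂ (Fin 2))‖ = 1 := by
        have := z.2; rwa [mem_sphere_zero_iff_norm] at this
      rw [hz1, mul_one] at this
      simpa using this
    have ha0 : a ≠ 0 := by
      intro h; rw [h] at hnorm; simp at hnorm
    refine ⟨a⁻¹, ?_, ?_, ?_⟩
    · rw [norm_inv, hnorm]; norm_num
    · rw [← ha, smul_smul, inv_mul_cancel₀ ha0, one_smul]
    · rw [hhmap]
      simp only
      have hz : (z : EuclideanSpace ℂ (Fin 2)) =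
          a⁻¹ • (σ (mkS z) : EuclideanSpace ℂ (Fin 2)) := by
        rw [← ha, smul_smul, inv_mul_cancel₀ ha0, one_smul]
      rw [hz, inner_smul_right, inner_self_eq_norm_sq_to_K, hσnorm (mkS z)]
      norm_num
  have habs : ∀ z : Metric.sphere (0 : EuclideanSpace ℂ (Fin 2)) 1, ‖hmap z‖ = 1 := by
    intro z
    obtain ⟨c, hc1, _, hc3⟩ := key z
    rw [hc3, hc1]
  have hmapc : Continuous hmap :=
    Continuous.inner (continuous_subtype_val.comp (hσc.comp hmkc)) continuous_subtype_val
  -- construction of the retraction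
  set m : ℂ → ℝ := fun w => max 1 (‖w‖) with hm
  have hm1 : ∀ w, 1 ≤ m w := fun w => le_max_left _ _
  have hm0 : ∀ w, 0 < m w := fun w => lt_of_lt_of_le one_pos (hm1 w)
  have hmC : ∀ w, ((m w : ℝ) : ℂ) ≠ 0 := by
    intro w
    simp only [ne_eq, Complex.ofReal_eq_zero]
    exact ne_of_gt (hm0 w)
  have hmc : Continuous m := continuous_const.max continuous_norm
  set w' : ℂ → ℂ := fun w => w / ((m w : ℝ) : ℂ) with hw'
  have hw'le : ∀ w, ‖w' w‖ ≤ 1 := by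
    intro w
    rw [hw']
    simp only [norm_div, Complex.norm_real, Real.norm_eq_abs, abs_of_pos (hm0 w)]
    rw [div_le_one (hm0 w)]
    exact le_max_right _ _
  have hw'c : Continuous w' := by
    apply Continuous.div continuous_id (Complex.continuous_ofReal.comp hmc) hmC
  set r : ℂ → ℝ := fun w => Real.sqrt (1 - ‖w' w‖ ^ 2) with hr
  have hrc : Continuous r :=
    Real.continuous_sqrt.comp (continuous_const.sub ((continuous_norm.comp hw'c).pow 2))
  have hr0 : ∀ w, 0 ≤ r w := fun w => Real.sqrt_nonneg _
  set Φ : ℂ → EuclideanSpace ℂ (Fin 2) := fun w => hopfVec (w' w) ((r w : ℝ) : ℂ) with hΦ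
  have hΦnorm : ∀ w, ‖Φ w‖ = 1 := by
    intro w
    rw [hΦ]
    simp only
    rw [hopfVec_norm]
    have h1 : ‖((r w : ℝ) : ℂ)‖ = r w := by
      rw [Complex.norm_real, Real.norm_eq_abs, _root_.abs_of_nonneg (hr0 w)]
    rw [h1, hr]
    simp only
    rw [Real.sq_sqrt (by nlinarith [hw'le w, norm_nonneg (w' w)])]
    norm_num
  have hΦmem : ∀ w, Φ w ∈ Metric.sphere (0 : EuclideanSpace ℂ (Fin 2)) 1 := by
    intro w
    rw [mem_sphere_zero_iff_norm]
    exact hΦnorm w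
  have hΦc : Continuous Φ := hopfVec_continuous hw'c (Complex.continuous_ofReal.comp hrc)
  set ΦS : ℂ → Metric.sphere (0 : EuclideanSpace ℂ (Fin 2)) 1 :=
    fun w => ⟨Φ w, hΦmem w⟩ with hΦS
  have hΦSc : Continuous ΦS := hΦc.subtype_mk _
  have he₁norm : ‖hopfVec 1 0‖ = 1 := by
    rw [hopfVec_norm]; simp
  have he₁ : hopfVec 1 0 ∈ Metric.sphere (0 : EuclideanSpace ℂ (Fin 2)) 1 := by
    rw [mem_sphere_zero_iff_norm]; exact he₁norm
  set E : Metric.sphere (0 : EuclideanSpace ℂ (Fin 2)) 1 := ⟨hopfVec 1 0, he₁⟩ with hE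
  set G : ℂ → ℂ := fun w => hmap (ΦS w) * (starRingEnd ℂ) (hmap E) with hG
  have hGc : Continuous G := ((hmapc.comp hΦSc).mul continuous_const)
  have hG1 : ∀ w, ‖G w‖ = 1 := by
    intro w
    rw [hG]
    simp only [norm_mul, Complex.norm_conj]
    rw [habs, habs, mul_one]
  have hGid : ∀ w, ‖w‖ = 1 → G w = w := by
    intro w hw
    have hmw : m w = 1 := by rw [hm]; simp [hw]
    have hw'w : w' w = w := by
      simp only [hw']
      rw [hmw]
      simp
    have hrw : r w = 0 := by
      simp only [hr, hw'w, hw]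
      norm_num
    have hΦw : Φ w = w • hopfVec 1 0 := by
      simp only [hΦ, hw'w, hrw, Complex.ofReal_zero]
      rw [hopfVec_smul]
    have hwnz : w ≠ 0 := by intro h; rw [h] at hw; simp at hw
    have hmkeq : mkS (ΦS w) = mkS E := by
      simp only [hmkS]
      rw [Projectivization.mk_eq_mk_iff']
      refine ⟨w, ?_⟩
      show w • hopfVec 1 0 = Φ w
      exact hΦw.symm
    have hcoe : ((ΦS w) : EuclideanSpace ℂ (Fin 2)) =
        w • (E : EuclideanSpace ℂ (Fin 2)) := by
      show Φ w = w • hopfVec 1 0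
      exact hΦw
    have hmapval : hmap (ΦS w) = w * hmap E := by
      simp only [hhmap, hmkeq]
      rw [hcoe, inner_smul_right]
    rw [hG]
    simp only
    rw [hmapval, mul_assoc, Complex.mul_conj, Complex.normSq_eq_norm_sq, habs]
    norm_num
  exact hopfAux_no_retraction G hGc hG1 hGid


end
end

section
/- The composite map S³ × S¹ → S³ → ℙ(ℂ²), given by first projecting to the S³ factor and then applying the Hopf map h : S³ → ℙ(ℂ²) sending a unit vector z ∈ ℂ² to the complex line it spans, admits no continuous section: there is no continuous map σ : ℙ(ℂ²) → S³ × S¹ with h(pr₁(σ(ℓ))) = ℓ for all ℓ ∈ ℙ(ℂ²). -/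
open Metric

/-- The 3-sphere: the unit sphere in `ℂ²`. -/
noncomputable abbrev Sphere3 : Type :=
  Metric.sphere (0 : EuclideanSpace ℂ (Fin 2)) 1

/-- The circle: the unit sphere in `ℂ`. -/
noncomputable abbrev Circle1 : Type := Metric.sphere (0 : ℂ) 1

/-- The Hopf map `S³ → ℙ(ℂ²)`, sending a unit vector to the complex line it spans. -/
noncomputable def hopfMap (z : Sphere3) : Projectivization ℂ (EuclideanSpace ℂ (Fin 2)) :=
  Projectivization.mk ℂ (z : EuclideanSpace ℂ (Fin 2))
    (by
      have h := z.2
      rw [mem_sphere_zero_iff_norm] at h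
      intro h0
      rw [h0] at h
      simp at h)


open Complex in
private lemma exists_log (g : ℂ → ℂ) (hg : Continuous g)
    (h0 : ∀ z ∈ Metric.closedBall (0:ℂ) 1, g z ≠ 0) :
    ∃ L : ℂ → ℂ, ContinuousOn L (Metric.closedBall (0:ℂ) 1) ∧
      ∀ z ∈ Metric.closedBall (0:ℂ) 1, Complex.exp (L z) = g z := by
  -- minimum of ‖g‖ on the disk
  obtain ⟨z₀, hz₀, hmin⟩ := (isCompact_closedBall (0:ℂ) 1).exists_isMinOn
    ⟨0, by simp⟩ (hg.norm.continuousOn)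
  set ε := ‖g z₀‖ with hε
  have hεpos : 0 < ε := norm_pos_iff.mpr (h0 z₀ hz₀)
  have hlow : ∀ z ∈ Metric.closedBall (0:ℂ) 1, ε ≤ ‖g z‖ := fun z hz => hmin hz
  -- uniform continuity
  have huc := (isCompact_closedBall (0:ℂ) 1).uniformContinuousOn_of_continuous hg.continuousOn
  obtain ⟨δ, hδpos, hδ⟩ := Metric.uniformContinuousOn_iff.mp huc ε hεpos
  obtain ⟨n, hn⟩ := exists_nat_one_div_lt hδpos
  set N : ℕ := n + 1 with hN
  have hNpos : (0:ℝ) < N := by positivity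
  -- membership of segment points
  have hmem : ∀ (k : ℕ), k ≤ N → ∀ z ∈ Metric.closedBall (0:ℂ) 1,
      (((k:ℂ)/N) * z) ∈ Metric.closedBall (0:ℂ) 1 := by
    intro k hk z hz
    rw [mem_closedBall_zero_iff] at hz ⊢
    have h1 : ‖((k:ℂ)/N)‖ ≤ 1 := by
      rw [norm_div]
      simp only [Complex.norm_natCast]
      rw [div_le_one (by exact_mod_cast hNpos)]
      exact_mod_cast hk
    calc ‖((k:ℂ)/N) * z‖ = ‖((k:ℂ)/N)‖ * ‖z‖ := norm_mul _ _
      _ ≤ 1 * 1 := mul_le_mul h1 hz (norm_nonneg _) zero_le_one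
      _ = 1 := by ring
  -- the quotient terms
  set q : ℕ → ℂ → ℂ := fun k z => g (((k+1:ℕ):ℂ)/N * z) / g (((k:ℕ):ℂ)/N * z) with hq
  have hqmem : ∀ k < N, ∀ z ∈ Metric.closedBall (0:ℂ) 1, ‖q k z - 1‖ < 1 := by
    intro k hk z hz
    have hm1 := hmem (k+1) (by omega) z hz
    have hm2 := hmem k (by omega) z hz
    have hne2 : g (((k:ℕ):ℂ)/N * z) ≠ 0 := h0 _ hm2
    have hdist : dist (((k+1:ℕ):ℂ)/N * z) (((k:ℕ):ℂ)/N * z) < δ := by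
      rw [dist_eq_norm]
      have : ((k+1:ℕ):ℂ)/N * z - ((k:ℕ):ℂ)/N * z = (1/(N:ℂ)) * z := by
        push_cast; ring
      rw [this, norm_mul]
      have hzn : ‖z‖ ≤ 1 := mem_closedBall_zero_iff.mp hz
      have h1N : ‖(1/(N:ℂ))‖ = 1/(N:ℝ) := by
        rw [norm_div]; simp
      calc ‖(1/(N:ℂ))‖ * ‖z‖ ≤ 1/(N:ℝ) * 1 := by
            rw [h1N]; exact mul_le_mul_of_nonneg_left hzn (by positivity)
        _ = 1/(N:ℝ) := by ring
        _ < δ := by rw [hN]; push_cast; exact hn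
    have hgd := hδ _ hm1 _ hm2 hdist
    have : q k z - 1 = (g (((k+1:ℕ):ℂ)/N * z) - g (((k:ℕ):ℂ)/N * z)) / g (((k:ℕ):ℂ)/N * z) :=
      div_sub_one hne2
    rw [this, norm_div]
    rw [div_lt_one (norm_pos_iff.mpr hne2)]
    calc ‖g (((k+1:ℕ):ℂ)/N * z) - g (((k:ℕ):ℂ)/N * z)‖ = dist (g (((k+1:ℕ):ℂ)/N * z)) (g (((k:ℕ):ℂ)/N * z)) := (dist_eq_norm _ _).symm
      _ < ε := hgd
      _ ≤ ‖g (((k:ℕ):ℂ)/N * z)‖ := hlow _ hm2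
  refine ⟨fun z => Complex.log (g 0) + ∑ k ∈ Finset.range N, Complex.log (q k z), ?_, ?_⟩
  · apply ContinuousOn.add continuousOn_const
    apply continuousOn_finset_sum
    intro k hk
    rw [Finset.mem_range] at hk
    intro z hz
    have hslit : q k z ∈ Complex.slitPlane := by
      rw [Complex.mem_slitPlane_iff]
      left
      have h1 := hqmem k hk z hz
      have h2 : |(q k z - 1).re| ≤ ‖q k z - 1‖ := Complex.abs_re_le_norm _
      have h3 := neg_abs_le ((q k z - 1).re)
      have h4 : (q k z - 1).re = (q k z).re - 1 := by simp
      linarith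
    have hqc : ContinuousAt (q k) z := by
      apply ContinuousAt.div
      · exact (hg.comp (continuous_mul_left _)).continuousAt
      · exact (hg.comp (continuous_mul_left _)).continuousAt
      · exact h0 _ (hmem k (by omega) z hz)
    exact ((continuousAt_clog hslit).comp hqc).continuousWithinAt
  · intro z hz
    have key : ∀ m ≤ N, Complex.exp (Complex.log (g 0) + ∑ k ∈ Finset.range m, Complex.log (q k z))
        = g (((m:ℕ):ℂ)/N * z) := by
      intro m hm
      induction m with
      | zero => simp [Complex.exp_log (by simpa using h0 0 (by simp))]
      | succ m ih =>
        have ihm := ih (by omega)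
        rw [Finset.sum_range_succ, ← add_assoc, Complex.exp_add, ihm]
        have hnum : g (((m+1:ℕ):ℂ)/N * z) ≠ 0 := h0 _ (hmem (m+1) hm z hz)
        have hden : g (((m:ℕ):ℂ)/N * z) ≠ 0 := h0 _ (hmem m (by omega) z hz)
        rw [Complex.exp_log (div_ne_zero hnum hden)]
        show g (((m:ℕ):ℂ)/N * z) * (g (((m+1:ℕ):ℂ)/N * z) / g (((m:ℕ):ℂ)/N * z)) = _
        rw [mul_comm]; exact div_mul_cancel₀ _ hden
    have := key N le_rfl
    rwa [div_self (by exact_mod_cast hNpos.ne'), one_mul] at this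


open Complex in
private lemma no_antiretraction : ¬ ∃ g : ℂ → ℂ, Continuous g ∧
    (∀ z ∈ Metric.closedBall (0:ℂ) 1, g z ≠ 0) ∧
    ∃ c : ℂ, c ≠ 0 ∧ ∀ w : ℂ, ‖w‖ = 1 → g w = (starRingEnd ℂ) w * c := by
  rintro ⟨g, hg, h0, c, hc, hbd⟩
  obtain ⟨L, hL, hLg⟩ := exists_log g hg h0
  set e : ℝ → ℂ := fun θ => Complex.exp (θ * I) with he
  have hemem : ∀ θ : ℝ, e θ ∈ Metric.closedBall (0:ℂ) 1 := by
    intro θ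
    rw [mem_closedBall_zero_iff, he]
    simp [Complex.norm_exp_ofReal_mul_I]
  have henorm : ∀ θ : ℝ, ‖e θ‖ = 1 := fun θ => Complex.norm_exp_ofReal_mul_I θ
  set w : ℝ → ℂ := fun θ => L (e θ) - Complex.log c + θ * I with hw
  have hexpw : ∀ θ, Complex.exp (w θ) = 1 := by
    intro θ
    rw [hw]
    simp only []
    rw [Complex.exp_add, Complex.exp_sub, hLg _ (hemem θ), Complex.exp_log hc,
      hbd _ (henorm θ)]
    have hconj : (starRingEnd ℂ) (e θ) = Complex.exp (-(θ * I)) := by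
      rw [he]
      simp only []
      rw [← Complex.exp_conj]
      congr 1
      simp [Complex.conj_ofReal]
    rw [hconj, mul_div_cancel_right₀ _ hc, ← Complex.exp_add, neg_add_cancel,
      Complex.exp_zero]
  set k : ℝ → ℝ := fun θ => ((w θ) / (2 * Real.pi * I)).re with hk
  have hkint : ∀ θ, ∃ m : ℤ, k θ = m := by
    intro θ
    obtain ⟨m, hm⟩ := Complex.exp_eq_one_iff.mp (hexpw θ)
    refine ⟨m, ?_⟩
    rw [hk]
    simp only []
    rw [hm, mul_div_assoc]
    rw [div_self (by simp [Real.pi_ne_zero, Complex.I_ne_zero])]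
    simp
  have hkcont : Continuous k := by
    apply Complex.continuous_re.comp
    apply Continuous.div_const
    apply Continuous.add
    · apply Continuous.sub _ continuous_const
      exact hL.comp_continuous (by continuity) hemem
    · exact (continuous_ofReal.comp continuous_id).mul continuous_const
  have hk2π : k (2 * Real.pi) = k 0 + 1 := by
    have hee : e (2 * Real.pi) = e 0 := by
      rw [he]; simp only []
      push_cast
      rw [Complex.exp_two_pi_mul_I]
      simp
    have hden : (2 * (Real.pi:ℂ) * I) ≠ 0 := by
      simp [Real.pi_ne_zero, Complex.I_ne_zero]
    rw [hk]
    simp only []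
    rw [hw]
    simp only []
    rw [hee]
    push_cast
    rw [zero_mul, add_zero, add_div, div_self hden, Complex.add_re, Complex.one_re]
  -- connectedness argument
  obtain ⟨m₀, hm₀⟩ := hkint 0
  have himg : k 0 + 1/2 ∈ k '' Set.Icc 0 (2 * Real.pi) := by
    have hpre : IsPreconnected (k '' Set.Icc 0 (2 * Real.pi)) :=
      (isPreconnected_Icc).image k hkcont.continuousOn
    have hoc := hpre.ordConnected
    have h1 : k 0 ∈ k '' Set.Icc 0 (2 * Real.pi) :=
      ⟨0, ⟨le_refl _, by positivity⟩, rfl⟩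
    have h2 : k (2 * Real.pi) ∈ k '' Set.Icc 0 (2 * Real.pi) :=
      ⟨2 * Real.pi, ⟨by positivity, le_refl _⟩, rfl⟩
    have := hoc.out h1 h2
    apply this
    rw [hk2π]
    constructor <;> linarith
  obtain ⟨θ, _, hθ⟩ := himg
  obtain ⟨m, hm⟩ := hkint θ
  rw [hθ, hm₀] at hm
  have : (2*m : ℝ) = 2*m₀ + 1 := by push_cast at hm ⊢; linarith
  have : (2*m : ℤ) = 2*m₀ + 1 := by exact_mod_cast this
  omega


-- the disk-to-sphere map
noncomputable def vmap (w : ℂ) : EuclideanSpace ℂ (Fin 2) :=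
  (WithLp.equiv 2 (Fin 2 → ℂ)).symm ![w, ((Real.sqrt (1 - ‖w‖^2) : ℝ) : ℂ)]

lemma vmap_apply0 (w : ℂ) : vmap w 0 = w := rfl
lemma vmap_apply1 (w : ℂ) : vmap w 1 = ((Real.sqrt (1 - ‖w‖^2) : ℝ) : ℂ) := rfl

lemma vmap_ne_zero (w : ℂ) : vmap w ≠ 0 := by
  intro h
  by_cases hw : w = 0
  · have := congrArg (fun v => v 1) h
    rw [vmap_apply1] at this
    simp [hw] at this
  · exact hw (by rw [← vmap_apply0 w, h]; rfl)

lemma vmap_continuous : Continuous vmap := by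
  apply (PiLp.continuous_toLp 2 (fun _ : Fin 2 => ℂ)).comp
  apply continuous_pi
  intro i
  fin_cases i
  · simpa using continuous_id'
  · simp only [Matrix.cons_val_one, Matrix.head_cons]
    exact Complex.continuous_ofReal.comp
      ((continuous_const.sub ((continuous_norm).pow 2)).sqrt)

lemma vmap_norm (w : ℂ) (hw : ‖w‖ ≤ 1) : ‖vmap w‖ = 1 := by
  rw [EuclideanSpace.norm_eq]
  rw [Fin.sum_univ_two, vmap_apply0, vmap_apply1]
  rw [Complex.norm_real, Real.norm_eq_abs]
  rw [_root_.abs_of_nonneg (Real.sqrt_nonneg _), Real.sq_sqrt (by nlinarith [norm_nonneg w])]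
  rw [show ‖w‖^2 + (1 - ‖w‖^2) = 1 by ring, Real.sqrt_one]

lemma vmap_boundary (w : ℂ) (hw : ‖w‖ = 1) : vmap w = w • vmap 1 := by
  have h1 : Real.sqrt (1 - ‖w‖^2) = 0 := by rw [hw]; simp
  have h2 : Real.sqrt (1 - ‖(1:ℂ)‖^2) = 0 := by simp
  rw [vmap, vmap, WithLp.equiv_symm_apply, ← WithLp.toLp_smul]
  congr 1
  rw [h1, h2, Matrix.smul_cons, Matrix.smul_cons]
  simp


theorem torus_bundle_over_sphere_has_no_section :
    ¬ ∃ σ : Projectivization ℂ (EuclideanSpace ℂ (Fin 2)) → Sphere3 × Circle1,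
      Continuous σ ∧
      ∀ ℓ : Projectivization ℂ (EuclideanSpace ℂ (Fin 2)),
        hopfMap (σ ℓ).1 = ℓ := by
  rintro ⟨σ, hσ, hsec⟩
  apply no_antiretraction
  set s : Projectivization ℂ (EuclideanSpace ℂ (Fin 2)) → EuclideanSpace ℂ (Fin 2) :=
    fun ℓ => ((σ ℓ).1 : EuclideanSpace ℂ (Fin 2)) with hs
  have hscont : Continuous s := continuous_subtype_val.comp (continuous_fst.comp hσ)
  set p : ℂ → Projectivization ℂ (EuclideanSpace ℂ (Fin 2)) :=
    fun w => Projectivization.mk ℂ (vmap w) (vmap_ne_zero w) with hp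
  have hpcont : Continuous p :=
    continuous_quotient_mk'.comp (vmap_continuous.subtype_mk vmap_ne_zero)
  set g : ℂ → ℂ := fun w => inner ℂ (vmap w) (s (p w)) with hg
  have hgcont : Continuous g := Continuous.inner vmap_continuous (hscont.comp hpcont)
  have hunit : ∀ w : ℂ, ‖w‖ ≤ 1 → ∃ a : ℂˣ, g w = a := by
    intro w hw
    have h1 := hsec (p w)
    rw [hopfMap] at h1
    rw [hp] at h1
    obtain ⟨a, ha⟩ := (Projectivization.mk_eq_mk_iff ℂ _ _ _ (vmap_ne_zero w)).mp h1
    refine ⟨a, ?_⟩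
    have ha' : (a:ℂ) • vmap w = s (p w) := ha
    show inner ℂ (vmap w) (s (p w)) = (a:ℂ)
    rw [← ha', inner_smul_right, inner_self_eq_norm_sq_to_K, vmap_norm w hw]
    norm_num
  have h0 : ∀ z ∈ Metric.closedBall (0:ℂ) 1, g z ≠ 0 := by
    intro z hz
    obtain ⟨a, ha⟩ := hunit z (mem_closedBall_zero_iff.mp hz)
    rw [ha]
    exact a.ne_zero
  have hpbd : ∀ w : ℂ, ‖w‖ = 1 → p w = p 1 := by
    intro w hw
    have hw0 : w ≠ 0 := by intro h; rw [h] at hw; simp at hw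
    rw [hp]
    simp only []
    rw [Projectivization.mk_eq_mk_iff]
    exact ⟨Units.mk0 w hw0, (vmap_boundary w hw).symm⟩
  set c : ℂ := s (p 1) 0 with hc
  have hbd : ∀ w : ℂ, ‖w‖ = 1 → g w = (starRingEnd ℂ) w * c := by
    intro w hw
    rw [hg]
    simp only []
    rw [hpbd w hw, PiLp.inner_apply, Fin.sum_univ_two, vmap_apply0, vmap_apply1]
    have : Real.sqrt (1 - ‖w‖^2) = 0 := by rw [hw]; simp
    rw [this]
    simp [RCLike.inner_apply, hc, mul_comm]
  have hcne : c ≠ 0 := by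
    obtain ⟨a, ha⟩ := hunit 1 (by simp)
    have := hbd 1 (by simp)
    rw [ha] at this
    simp at this
    rw [← this]
    exact a.ne_zero
  exact ⟨g, hgcont, h0, c, hcne, hbd⟩
end
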